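/- Every finite matroid M of rank two satisfies dw(M) ≤ 5. Consequently, the class of rank-two matroids is pigeonhole. -/

import Mathlib

open scoped Classical

/-- A set-system: a finite ground set `E` together with a family `Ind` of subsets of `E`,
called the independent sets. -/
structure SetSystem (α : Type) where
  E : Finset α
  Ind : Set (Finset α)
  ind_subset : ∀ X ∈ Ind, X ⊆ E

namespace SetSystem

variable {α : Type}

/-- The relation `X ∼_U X'`: for every `Z ⊆ E − U`, `X ∪ Z` is independent iff `X' ∪ Z` is. -/
def Eqv (S : SetSystem α) (U : Finset α) (X X' : Finset α) : Prop :=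
  ∀ Z : Finset α, Z ⊆ S.E \ U → ((X ∪ Z) ∈ S.Ind ↔ (X' ∪ Z) ∈ S.Ind)

/-- `∼_U` as a setoid on the subsets of `U`. -/
def eqvSetoid (S : SetSystem α) (U : Finset α) : Setoid {X : Finset α // X ⊆ U} where
  r X X' := S.Eqv U X.1 X'.1
  iseqv := ⟨fun _ _ _ => Iff.rfl, fun h Z hZ => (h Z hZ).symm,
    fun h h' Z hZ => (h Z hZ).trans (h' Z hZ)⟩

/-- The number of equivalence classes of `∼_U` on the subsets of `U`. -/
noncomputable def numClasses (S : SetSystem α) (U : Finset α) : ℕ :=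
  Nat.card (Quotient (S.eqvSetoid U))

end SetSystem

/-- A decomposition of a finite ground set `E`: a subcubic tree (every vertex has degree
one or three) together with a bijection from `E` to the set of leaves (degree-one vertices). -/
structure Decomp (α : Type) (E : Finset α) where
  V : Type
  [fintypeV : Fintype V]
  [decEqV : DecidableEq V]
  G : SimpleGraph V
  [decAdj : DecidableRel G.Adj]
  isTree : G.IsTree
  subcubic : ∀ v : V, G.degree v = 1 ∨ G.degree v = 3
  leaf : α → V
  leaf_degree : ∀ a ∈ E, G.degree (leaf a) = 1
  leaf_injOn : Set.InjOn leaf ↑E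
  leaf_surj : ∀ v : V, G.degree v = 1 → ∃ a ∈ E, leaf a = v

namespace Decomp

attribute [instance] fintypeV decEqV decAdj

variable {α : Type} {E : Finset α}

/-- The set `U ⊆ E` is displayed by an edge `uv` of the decomposition: it consists of those
elements of `E` whose leaf lies in the component of `T − uv` containing `u`. -/
def Displays (D : Decomp α E) (U : Finset α) : Prop :=
  U ⊆ E ∧ ∃ u v : D.V, D.G.Adj u v ∧
    ∀ a ∈ E, (a ∈ U ↔ (D.G.deleteEdges {s(u, v)}).Reachable (D.leaf a) u)

end Decomp

namespace SetSystem

variable {α : Type}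

/-- The decomposition-width of a set-system: the least `k` such that some decomposition has
all displayed sets `U` with at most `k` equivalence classes under `∼_U`. -/
noncomputable def dw (S : SetSystem α) : ℕ :=
  sInf {k : ℕ | ∃ D : Decomp α S.E, ∀ U : Finset α, D.Displays U → S.numClasses U ≤ k}

end SetSystem

namespace Matroid

variable {α : Type}

/-- The set-system of independent sets of a matroid on a finite type. -/
noncomputable def toSetSystem [Fintype α] (M : Matroid α) : SetSystem α where
  E := M.E.toFinite.toFinset
  Ind := {X : Finset α | M.Indep ↑X}
  ind_subset := fun _X hX _a ha =>
    (Set.Finite.mem_toFinset _).2 (hX.subset_ground (Finset.mem_coe.2 ha))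

/-- The decomposition-width of a matroid. -/
noncomputable def dw [Fintype α] (M : Matroid α) : ℕ := M.toSetSystem.dw

/-- The rank of a set in a matroid: the largest size of an independent subset. -/
noncomputable def rank [Fintype α] (M : Matroid α) (U : Set α) : ℕ :=
  sSup {n : ℕ | ∃ X : Finset α, ↑X ⊆ U ∧ M.Indep ↑X ∧ X.card = n}

/-- The connectivity function `λ_M(U) = r(U) + r(E − U) − r(M)`. -/
noncomputable def lambda [Fintype α] (M : Matroid α) (U : Set α) : ℕ :=
  M.rank U + M.rank (M.E \ U) - M.rank M.E

/-- The branch-width of a matroid: the least `k` such that some decomposition of the ground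
set has `λ_M(U) + 1 ≤ k` for every displayed set `U`. -/
noncomputable def bw [Fintype α] (M : Matroid α) : ℕ :=
  sInf {k : ℕ | ∃ D : Decomp α M.toSetSystem.E,
    ∀ U : Finset α, D.Displays U → M.lambda ↑U + 1 ≤ k}

/-- Deletion of a set of elements from a matroid. -/
def del (M : Matroid α) (D : Set α) : Matroid α := M ↾ (M.E \ D)

/-- Contraction of a set of elements in a matroid, defined via duality. -/
def con (M : Matroid α) (C : Set α) : Matroid α := (M✶ ↾ (M.E \ C))✶

/-- `N` is a minor of `M`: `N` is obtained from `M` by contractions and deletions. -/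
def IsMinorOf (N M : Matroid α) : Prop :=
  ∃ C D : Set α, C ⊆ M.E ∧ D ⊆ M.E ∧ Disjoint C D ∧ N = (M.con C).del D

/-- A pigeonhole class of matroids: every subclass of bounded branch-width has bounded
decomposition-width. -/
def PigeonholeClass [Fintype α] (𝓜 : Set (Matroid α)) : Prop :=
  ∀ lam : ℕ, 0 < lam → ∃ ρ : ℕ, ∀ M ∈ 𝓜, M.bw ≤ lam → M.dw ≤ ρ

end Matroid

/-- A `Σ`-tree: a finite full binary tree with `Γ`-labelled vertices. -/
inductive STree (Γ : Type) : Type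
  | leaf : Γ → STree Γ
  | node : Γ → STree Γ → STree Γ → STree Γ

/-- A tree automaton with alphabet `Γ`, state set `Q`, accepting states `accept`, and
(partial) transition rules `δ0` and `δ2`. -/
structure TreeAut (Γ : Type) (Q : Type) where
  accept : Finset Q
  δ0 : Γ → Option (Finset Q)
  δ2 : Γ → Q → Q → Option (Finset Q)

namespace STree

variable {Γ : Type}

/-- The number of leaves of a tree. -/
def leafCount : STree Γ → ℕ
  | .leaf _ => 1
  | .node _ l r => l.leafCount + r.leafCount

/-- `Subtree s t` means `s` is the subtree of `t` rooted at one of the vertices of `t`. -/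
inductive Subtree : STree Γ → STree Γ → Prop
  | refl (t : STree Γ) : Subtree t t
  | left {s l r : STree Γ} {a : Γ} : Subtree s l → Subtree s (.node a l r)
  | right {s l r : STree Γ} {a : Γ} : Subtree s r → Subtree s (.node a l r)

/-- Relabel the vertices of a tree: each leaf label is transformed by `f` applied to its
left-to-right index (offset by the second argument), internal labels by `g`. -/
def relabel {Γ' : Type} (f : ℕ → Γ → Γ') (g : Γ → Γ') : STree Γ → ℕ → STree Γ'
  | .leaf a, k => .leaf (f k a)
  | .node a l r, k => .node (g a) (l.relabel f g k) (r.relabel f g (k + l.leafCount))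

end STree

namespace TreeAut

variable {Γ Q : Type}

/-- The run of a tree automaton on a `Σ`-tree, computed bottom-up: a leaf receives
`δ0` of its label, an internal vertex the union of `δ2` over pairs of states at its
children (the empty set if any needed transition is undefined). -/
noncomputable def run (A : TreeAut Γ Q) : STree Γ → Finset Q
  | .leaf a => (A.δ0 a).getD ∅
  | .node a l r =>
      if ∀ qL ∈ A.run l, ∀ qR ∈ A.run r, (A.δ2 a qL qR).isSome then
        (A.run l).biUnion fun qL => (A.run r).biUnion fun qR => (A.δ2 a qL qR).getD ∅
      else ∅

/-- The automaton accepts a tree if the set of states assigned to the root contains an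
accepting state. -/
def Accepts (A : TreeAut Γ Q) (t : STree Γ) : Prop :=
  ∃ q ∈ A.run t, q ∈ A.accept

/-- A deterministic automaton: every image of `δ0` and `δ2` is a singleton. -/
def Deterministic (A : TreeAut Γ Q) : Prop :=
  (∀ a s, A.δ0 a = some s → s.card = 1) ∧
    (∀ a q₁ q₂ s, A.δ2 a q₁ q₂ = some s → s.card = 1)

end TreeAut

/-- The alphabet `Σ ∪ Σ × {0,1}^I`. -/
abbrev EncAlph (Γ : Type) (I : Finset ℕ) : Type := Γ ⊕ Γ × ({j // j ∈ I} → Bool)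

/-- `enc(T, σ, φ, {Y_j}_{j ∈ I})`: relabel each leaf `v` of the tree with `(σ(v), s)`, where
`s(j) = 1` iff `φ⁻¹(v) ∈ Y_j`; internal vertices keep their labels. -/
noncomputable def enc {α Γ : Type} (E : Finset α) (t : STree Γ)
    (φ : {a // a ∈ E} ≃ Fin t.leafCount) (I : Finset ℕ)
    (Y : {j // j ∈ I} → Finset α) : STree (EncAlph Γ I) :=
  t.relabel
    (fun k a => Sum.inr (a, fun j =>
      if h : k < t.leafCount then
        decide ((φ.symm ⟨k, h⟩ : {a // a ∈ E}).1 ∈ Y j) else false))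
    Sum.inl 0

/-- An `I`-ary automaton: `δ0` is defined only on leaf labels from `Σ × {0,1}^I`. -/
def TreeAut.IsIary {Γ Q : Type} (I : Finset ℕ) (A : TreeAut (EncAlph Γ I) Q) : Prop :=
  ∀ a : Γ, A.δ0 (Sum.inl a) = none

/-- The set-system `M(A, T, σ, φ)` determined by an `{i}`-ary automaton `A` and a parse
tree: a subset `Y ⊆ E` is independent iff `A` accepts `enc(T, σ, φ, {Y})`. -/
noncomputable def systemOf {α Γ Q : Type} (i : ℕ) (A : TreeAut (EncAlph Γ {i}) Q)
    (E : Finset α) (t : STree Γ) (φ : {a // a ∈ E} ≃ Fin t.leafCount) : SetSystem α where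
  E := E
  Ind := {Y : Finset α | Y ⊆ E ∧ A.Accepts (enc E t φ {i} fun _ => Y)}
  ind_subset := fun _ hY => hY.1

/-- A class of set-systems is automatic: there is a single `{i}`-ary tree automaton which
recognises independence in every member, via a suitable parse tree for each member. -/
def Automatic {α : Type} (𝓜 : Set (SetSystem α)) : Prop :=
  ∃ (Γ : Type) (_ : Fintype Γ) (Q : Type) (_ : Fintype Q) (i : ℕ)
    (A : TreeAut (EncAlph Γ {i}) Q), A.IsIary {i} ∧
      ∀ S ∈ 𝓜, ∃ (t : STree Γ) (φ : {a // a ∈ S.E} ≃ Fin t.leafCount),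
        S = systemOf i A S.E t φ

/-- Formulas of counting monadic second-order logic `CMS₀`, with set variables `X_n`:
atomic formulas `Ind(X_i)`, `X_i ⊆ X_j` and `|X_i|_{p,q}`, closed under `¬`, `∧`, `∃`. -/
inductive CMS0 : Type
  | ind : ℕ → CMS0
  | subset : ℕ → ℕ → CMS0
  | card : ℕ → ℕ → ℕ → CMS0
  | not : CMS0 → CMS0
  | and : CMS0 → CMS0 → CMS0
  | ex : ℕ → CMS0 → CMS0

namespace CMS0

/-- The free variables of a `CMS₀` formula. -/
def free : CMS0 → Finset ℕ
  | .ind i => {i}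
  | .subset i j => {i, j}
  | .card i _ _ => {i}
  | .not φ => φ.free
  | .and φ ψ => φ.free ∪ ψ.free
  | .ex i φ => φ.free.erase i

/-- Satisfaction of a `CMS₀` formula by a set-system under an interpretation `θ` assigning
subsets of the ground set to variables. -/
def Sat {α : Type} (S : SetSystem α) (θ : ℕ → Finset α) : CMS0 → Prop
  | .ind i => θ i ∈ S.Ind
  | .subset i j => θ i ⊆ θ j
  | .card i p q => (θ i).card % q = p
  | .not φ => ¬ Sat S θ φ
  | .and φ ψ => Sat S θ φ ∧ Sat S θ ψ
  | .ex i φ => ∃ Y : Finset α, Y ⊆ S.E ∧ Sat S (Function.update θ i Y) φ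

end CMS0

/-!
In a rank-two matroid, whether `X ∪ Z` is independent for `Z` outside `U` depends only on
whether `X` is independent, on `|X| ∈ {0, 1, 2}`, and, for `X = {x}` a non-loop, on which
elements outside `U` lie in `cl {x}`. If at most one parallel class (fibre of `e ↦ cl {e}`)
meets both `U` and its complement, the last datum takes only two values, so `∼_U` has at most
five classes. Listing the ground set so that every parallel class is consecutive and hanging it
in that order from a caterpillar, every displayed set is a singleton, a co-singleton, a prefix
or a suffix of the list, and each of these splits at most one parallel class. The pigeonhole
property follows with the constant bound `5`.
-/

namespace SimpleGraph

variable {V : Type*} {G : SimpleGraph V} {u v x : V} {S : Set V}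

structure IsEdgeSide (G : SimpleGraph V) (u v : V) (S : Set V) : Prop where
  left_mem : u ∈ S
  right_notMem : v ∉ S
  mem_iff_of_adj : ∀ a b, G.Adj a b → s(a, b) ≠ s(u, v) → (a ∈ S ↔ b ∈ S)

lemma IsEdgeSide.compl (h : G.IsEdgeSide u v S) : G.IsEdgeSide v u Sᶜ :=
  ⟨h.right_notMem, not_not.2 h.left_mem, fun a b hab hne =>
    not_congr (h.mem_iff_of_adj a b hab fun he => hne (he.trans Sym2.eq_swap))⟩

lemma isEdgeSide_singleton (huv : G.Adj u v) (hu : ∀ w, G.Adj u w → w = v) :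
    G.IsEdgeSide u v {u} := by
  refine ⟨rfl, huv.ne', fun a b hab hne => ?_⟩
  simp only [Set.mem_singleton_iff]
  constructor
  · rintro rfl
    exact absurd (by rw [hu b hab]) hne
  · rintro rfl
    exact absurd (by rw [hu a hab.symm, Sym2.eq_swap]) hne

lemma IsEdgeSide.mem_iff_of_reachable (h : G.IsEdgeSide u v S)
    {a b : V} (hab : (G.deleteEdges {s(u, v)}).Reachable a b) : a ∈ S ↔ b ∈ S := by
  obtain ⟨p⟩ := hab
  induction p with
  | nil => rfl
  | cons hadj _ ih =>
    rw [deleteEdges_adj, Set.mem_singleton_iff] at hadj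
    exact (h.mem_iff_of_adj _ _ hadj.1 hadj.2).trans ih

lemma IsEdgeSide.not_reachable (h : G.IsEdgeSide u v S) :
    ¬ (G.deleteEdges {s(u, v)}).Reachable u v :=
  fun huv => h.right_notMem ((h.mem_iff_of_reachable huv).1 h.left_mem)

lemma Walk.reachable_deleteEdges_or {y : V} (p : G.Walk x y) :
    (G.deleteEdges {s(u, v)}).Reachable x y ∨ (G.deleteEdges {s(u, v)}).Reachable x u ∨
      (G.deleteEdges {s(u, v)}).Reachable x v := by
  induction p with
  | nil => exact Or.inl .rfl
  | @cons a b _ hab _ ih =>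
    by_cases he : s(a, b) = s(u, v)
    · rcases Sym2.eq_iff.1 he with ⟨rfl, -⟩ | ⟨rfl, -⟩
      exacts [Or.inr (Or.inl .rfl), Or.inr (Or.inr .rfl)]
    · have hab' : (G.deleteEdges {s(u, v)}).Adj a b := (deleteEdges_adj ..).2 ⟨hab, he⟩
      exact ih.imp hab'.reachable.trans (Or.imp hab'.reachable.trans hab'.reachable.trans)

lemma IsEdgeSide.reachable_iff (hG : G.Connected) (h : G.IsEdgeSide u v S) (x : V) :
    (G.deleteEdges {s(u, v)}).Reachable x u ↔ x ∈ S := by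
  refine ⟨fun hx => (h.mem_iff_of_reachable hx).2 h.left_mem, fun hx => ?_⟩
  obtain ⟨p⟩ := hG.preconnected x u
  refine p.reachable_deleteEdges_or.elim id (Or.elim · id fun hxv => ?_)
  exact absurd ((h.mem_iff_of_reachable hxv).1 hx) h.right_notMem

lemma isTree_of_forall_isEdgeSide (hG : G.Connected)
    (h : ∀ u v, G.Adj u v → ∃ S, G.IsEdgeSide u v S) : G.IsTree := by
  refine ⟨hG, isAcyclic_iff_forall_adj_isBridge.2 fun u v huv => ?_⟩
  obtain ⟨S, hS⟩ := h u v huv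
  exact isBridge_iff.2 hS.not_reachable

end SimpleGraph

section Caterpillar

open SimpleGraph

variable {n : ℕ}

/-- Leaf `i` hangs from spine vertex `min (i - 1) (n - 3)`: the two end vertices of the spine
carry two leaves each, every other spine vertex one. -/
def caterpillar (n : ℕ) : SimpleGraph (Fin n ⊕ Fin (n - 2)) where
  Adj
    | .inl i, .inr j | .inr j, .inl i => (j : ℕ) = min ((i : ℕ) - 1) (n - 3)
    | .inr j, .inr k => (j : ℕ) + 1 = k ∨ (k : ℕ) + 1 = j
    | .inl _, .inl _ => False
  symm := ⟨by rintro (i | j) (i' | j') h <;> simp only at h ⊢ <;> omega⟩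
  loopless := ⟨by rintro (i | j) h <;> simp only at h; omega⟩

@[simp] lemma caterpillar_adj_inl_inl {i i' : Fin n} :
    ¬ (caterpillar n).Adj (.inl i) (.inl i') := id

@[simp] lemma caterpillar_adj_inl_inr {i : Fin n} {j : Fin (n - 2)} :
    (caterpillar n).Adj (.inl i) (.inr j) ↔ (j : ℕ) = min ((i : ℕ) - 1) (n - 3) := .rfl

@[simp] lemma caterpillar_adj_inr_inl {i : Fin n} {j : Fin (n - 2)} :
    (caterpillar n).Adj (.inr j) (.inl i) ↔ (j : ℕ) = min ((i : ℕ) - 1) (n - 3) := .rfl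

@[simp] lemma caterpillar_adj_inr_inr {j k : Fin (n - 2)} :
    (caterpillar n).Adj (.inr j) (.inr k) ↔ (j : ℕ) + 1 = k ∨ (k : ℕ) + 1 = j := .rfl

lemma caterpillar_degree_inl (hn : 3 ≤ n) (i : Fin n) : (caterpillar n).degree (.inl i) = 1 := by
  rw [degree, Finset.card_eq_one]
  refine ⟨.inr ⟨min ((i : ℕ) - 1) (n - 3), by omega⟩, Finset.ext ?_⟩
  rintro (i' | j) <;> simp [Fin.ext_iff]

lemma caterpillar_degree_inr (hn : 3 ≤ n) (j : Fin (n - 2)) :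
    (caterpillar n).degree (.inr j) = 3 := by
  have hj := j.isLt
  rw [degree, Finset.card_eq_three]
  refine ⟨.inl ⟨(j : ℕ) + 1, by omega⟩,
    if (j : ℕ) = 0 then .inl ⟨0, by omega⟩ else .inr ⟨(j : ℕ) - 1, by omega⟩,
    if _ : (j : ℕ) = n - 3 then .inl ⟨n - 1, by omega⟩ else .inr ⟨(j : ℕ) + 1, by omega⟩, ?_⟩
  split_ifs <;> refine ⟨?_, ?_, ?_, Finset.ext ?_⟩ <;>
    (try rintro (i | k)) <;> simp [Fin.ext_iff] <;> omega

lemma caterpillar_connected (hn : 3 ≤ n) : (caterpillar n).Connected := by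
  have spine : ∀ k (hk : k < n - 2),
      (caterpillar n).Reachable (.inr ⟨k, hk⟩) (.inr ⟨0, by omega⟩) := by
    intro k
    induction k with
    | zero => exact fun _ => .rfl
    | succ k ih =>
      exact fun hk => (Adj.reachable (by simp : (caterpillar n).Adj (.inr ⟨k + 1, hk⟩)
        (.inr ⟨k, Nat.lt_of_succ_lt hk⟩))).trans (ih _)
  refine (connected_iff_exists_forall_reachable _).2 ⟨.inr ⟨0, by omega⟩, ?_⟩
  rintro (i | ⟨k, hk⟩)
  · exact ((caterpillar_adj_inl_inr.2 rfl).reachable.trans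
      (spine (min ((i : ℕ) - 1) (n - 3)) (by omega))).symm
  · exact (spine k hk).symm

lemma caterpillar_isEdgeSide_leaf {i : Fin n} {j : Fin (n - 2)}
    (h : (caterpillar n).Adj (.inl i) (.inr j)) :
    (caterpillar n).IsEdgeSide (.inl i) (.inr j) {.inl i} := by
  refine isEdgeSide_singleton h ?_
  rintro (i' | k) hk
  · simp at hk
  · simp only [caterpillar_adj_inl_inr] at h hk
    rw [Fin.ext (hk.trans h.symm)]

/-- The side of spine vertex `p - 1` once the spine edge between `p - 1` and `p` is cut. -/
def caterpillarLower (n p : ℕ) : Set (Fin n ⊕ Fin (n - 2)) :=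
  {w | Sum.elim (fun i : Fin n => (i : ℕ) ≤ p) (fun k : Fin (n - 2) => (k : ℕ) < p) w}

lemma caterpillar_isEdgeSide_spine {j k : Fin (n - 2)} (hjk : (j : ℕ) + 1 = k) :
    (caterpillar n).IsEdgeSide (.inr j) (.inr k) (caterpillarLower n k) := by
  have hk := k.isLt
  refine ⟨by simp [caterpillarLower]; omega, by simp [caterpillarLower], ?_⟩
  rintro (i | l) (i' | l') hadj hne <;>
    simp [caterpillarLower, Fin.ext_iff] at hadj hne ⊢ <;> omega

lemma caterpillar_exists_isEdgeSide {u v : Fin n ⊕ Fin (n - 2)}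
    (huv : (caterpillar n).Adj u v) :
    ∃ S, (caterpillar n).IsEdgeSide u v S ∧ ∃ p : ℕ,
      Sum.inl ⁻¹' S = {i : Fin n | (i : ℕ) = p} ∨ Sum.inl ⁻¹' S = {i : Fin n | (i : ℕ) ≠ p} ∨
      Sum.inl ⁻¹' S = {i : Fin n | (i : ℕ) ≤ p} ∨ Sum.inl ⁻¹' S = {i : Fin n | p < (i : ℕ)} := by
  rcases u with i | j <;> rcases v with i' | k
  · simp at huv
  · exact ⟨_, caterpillar_isEdgeSide_leaf huv, i, Or.inl (by ext; simp [Fin.ext_iff])⟩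
  · exact ⟨_, (caterpillar_isEdgeSide_leaf huv.symm).compl, i',
      Or.inr (Or.inl (by ext; simp [Fin.ext_iff]))⟩
  · rcases huv with hjk | hkj
    · exact ⟨_, caterpillar_isEdgeSide_spine hjk, k,
        Or.inr (Or.inr (Or.inl (by ext; simp [caterpillarLower])))⟩
    · exact ⟨_, (caterpillar_isEdgeSide_spine hkj).compl, j,
        Or.inr (Or.inr (Or.inr (by ext; simp [caterpillarLower])))⟩

lemma caterpillar_isTree (hn : 3 ≤ n) : (caterpillar n).IsTree :=
  isTree_of_forall_isEdgeSide (caterpillar_connected hn) fun _ _ huv =>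
    (caterpillar_exists_isEdgeSide huv).imp fun _ h => h.1

end Caterpillar

section Fibers

variable {α : Type} {β : Type*} {f : α → β} {E U : Finset α} {n : ℕ} {pos : α → Fin n}

def SplitsAtMostOneFiber (f : α → β) (E U : Finset α) : Prop :=
  ∀ x ∈ U, ∀ x' ∈ U, ∀ z ∈ E \ U, ∀ z' ∈ E \ U, f z = f x → f z' = f x' → f x = f x'

lemma splitsAtMostOneFiber_of_card_le_one (hU : U.card ≤ 1) : SplitsAtMostOneFiber f E U :=
  fun x hx x' hx' _ _ _ _ _ _ => by rw [Finset.card_le_one.1 hU x hx x' hx']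

lemma SplitsAtMostOneFiber.sdiff (h : SplitsAtMostOneFiber f E U) :
    SplitsAtMostOneFiber f E (E \ U) := by
  intro x hx x' hx' z hz z' hz' hzx hz'x'
  rw [sdiff_sdiff_right_self, Finset.inf_eq_inter, Finset.mem_inter] at hz hz'
  rw [← hzx, ← hz'x']
  exact h z hz.2 z' hz'.2 x hx x' hx' hzx.symm hz'x'.symm

def ConsecutiveFibers (f : α → β) (E : Finset α) (pos : α → Fin n) : Prop :=
  ∀ x ∈ E, ∀ y ∈ E, ∀ z ∈ E, pos x ≤ pos y → pos y ≤ pos z → f x = f z → f y = f x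

lemma ConsecutiveFibers.splitsAtMostOneFiber_filter_le (h : ConsecutiveFibers f E pos) (p : ℕ) :
    SplitsAtMostOneFiber f E (E.filter fun a => (pos a : ℕ) ≤ p) := by
  set L := E.filter fun a => (pos a : ℕ) ≤ p
  suffices key : ∀ x ∈ L, ∀ x' ∈ L, ∀ z ∈ E \ L, pos x ≤ pos x' → f z = f x → f x = f x' by
    intro x hx x' hx' z hz z' hz' hzx hz'x'
    rcases le_total (pos x) (pos x') with hle | hle
    exacts [key x hx x' hx' z hz hle hzx, (key x' hx' x hx z' hz' hle hz'x').symm]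
  intro x hx x' hx' z hz hle hzx
  rw [← Finset.filter_not] at hz
  simp only [L, Finset.mem_filter, not_le] at hx hx' hz
  exact (h x hx.1 x' hx'.1 z hz.1 hle (Fin.le_iff_val_le_val.2 (by omega)) hzx.symm).symm

lemma splitsAtMostOneFiber_of_card_eq_two (hE : E.card = 2) (hU : U ⊆ E) :
    SplitsAtMostOneFiber f E U := by
  rcases le_or_gt U.card 1 with h | h
  · exact splitsAtMostOneFiber_of_card_le_one h
  · have h' : (E \ U).card ≤ 1 := by rw [Finset.card_sdiff_of_subset hU]; omega
    have := (splitsAtMostOneFiber_of_card_le_one (f := f) (E := E) h').sdiff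
    rwa [Finset.sdiff_sdiff_eq_self hU] at this

lemma card_filter_val_eq_le_one (hpos : Set.InjOn pos E) (p : ℕ) :
    (E.filter fun a => (pos a : ℕ) = p).card ≤ 1 :=
  Finset.card_le_one.2 fun a ha b hb => by
    rw [Finset.mem_filter] at ha hb
    exact hpos ha.1 hb.1 (Fin.ext (ha.2.trans hb.2.symm))

lemma exists_bijOn_consecutiveFibers [Fintype α] [Fintype β] (f : α → β) (E : Finset α)
    (hn : E.card = n) (hn0 : 0 < n) :
    ∃ pos : α → Fin n, Set.BijOn pos E Set.univ ∧ ConsecutiveFibers f E pos := by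
  let key : α → Fin (Fintype.card β) ×ₗ Fin (Fintype.card α) :=
    fun a => toLex (Fintype.equivFin β (f a), Fintype.equivFin α a)
  let _ : LinearOrder α := LinearOrder.lift' key fun a b h =>
    (Fintype.equivFin α).injective (congrArg (fun k => (ofLex k).2) h)
  let iso := E.orderIsoOfFin hn
  refine ⟨fun a => if h : a ∈ E then iso.symm ⟨a, h⟩ else ⟨0, hn0⟩,
    ⟨fun _ _ => trivial, ?_, ?_⟩, ?_⟩
  · intro a ha b hb hab
    dsimp only at hab
    rw [dif_pos (Finset.mem_coe.1 ha), dif_pos (Finset.mem_coe.1 hb)] at hab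
    simpa using iso.symm.injective hab
  · intro i _
    exact ⟨iso i, (iso i).2, by simp⟩
  · intro x hx y hy z hz hxy hyz hxz
    simp only [hx, hy, hz, dite_true, OrderIso.le_iff_le, Subtype.mk_le_mk] at hxy hyz
    have h1 := Prod.Lex.monotone_fst (key x) (key y) hxy
    have h2 := Prod.Lex.monotone_fst (key y) (key z) hyz
    simp only [key, ofLex_toLex, ← hxz] at h1 h2
    exact (Fintype.equivFin β).injective (le_antisymm h2 h1)

end Fibers

namespace Decomp

open SimpleGraph

variable {α : Type} {E : Finset α}

lemma eq_filter_of_isEdgeSide (D : Decomp α E) {U : Finset α} {u v : D.V} {S : Set D.V}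
    (hUE : U ⊆ E) (hU : ∀ a ∈ E, a ∈ U ↔ (D.G.deleteEdges {s(u, v)}).Reachable (D.leaf a) u)
    (hS : D.G.IsEdgeSide u v S) : U = E.filter (D.leaf · ∈ S) := by
  ext a
  rw [Finset.mem_filter, ← hS.reachable_iff D.isTree.1]
  exact ⟨fun ha => ⟨hUE ha, (hU a (hUE ha)).1 ha⟩, fun ⟨ha, h⟩ => (hU a ha).2 h⟩

noncomputable def pair (pos : α → Fin 2) (hpos : Set.BijOn pos E Set.univ) : Decomp α E where
  V := Fin 2
  G := ⊤
  isTree := isTree_of_forall_isEdgeSide connected_top fun u v huv =>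
    ⟨{u}, isEdgeSide_singleton huv fun w huw => by
      simp only [top_adj, ne_eq, Fin.ext_iff] at huv huw ⊢; omega⟩
  subcubic _ := Or.inl (by simp)
  leaf := pos
  leaf_degree _ _ := by simp
  leaf_injOn := hpos.injOn
  leaf_surj v _ := hpos.surjOn (Set.mem_univ v)

variable {n : ℕ}

noncomputable def caterpillar (pos : α → Fin n) (hpos : Set.BijOn pos E Set.univ)
    (hn : 3 ≤ n) : Decomp α E where
  V := Fin n ⊕ Fin (n - 2)
  G := _root_.caterpillar n
  isTree := caterpillar_isTree hn
  subcubic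
    | .inl i => Or.inl (caterpillar_degree_inl hn i)
    | .inr j => Or.inr (caterpillar_degree_inr hn j)
  leaf a := .inl (pos a)
  leaf_degree _ _ := caterpillar_degree_inl hn _
  leaf_injOn _ ha _ hb h := hpos.injOn ha hb (Sum.inl_injective h)
  leaf_surj
    | .inl i, _ => (hpos.surjOn (Set.mem_univ i)).imp fun _ ⟨ha, h⟩ => ⟨ha, congrArg _ h⟩
    | .inr j, h => absurd h (by rw [caterpillar_degree_inr hn]; decide)

lemma caterpillar_displays (pos : α → Fin n) (hpos : Set.BijOn pos E Set.univ) (hn : 3 ≤ n)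
    {U : Finset α} (hU : (caterpillar pos hpos hn).Displays U) : ∃ p : ℕ,
      U = E.filter (fun a => (pos a : ℕ) = p) ∨ U = E.filter (fun a => (pos a : ℕ) ≠ p) ∨
      U = E.filter (fun a => (pos a : ℕ) ≤ p) ∨ U = E.filter (fun a => p < (pos a : ℕ)) := by
  obtain ⟨hUE, u, v, huv, hU⟩ := hU
  obtain ⟨S, hS, p, hp⟩ := caterpillar_exists_isEdgeSide huv
  rw [eq_filter_of_isEdgeSide _ hUE hU hS]
  refine ⟨p, ?_⟩
  have key : ∀ (P : Fin n → Prop) [DecidablePred P], Sum.inl ⁻¹' S = {i | P i} →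
      E.filter (fun a => (caterpillar pos hpos hn).leaf a ∈ S) = E.filter (fun a => P (pos a)) :=
    fun P _ h => Finset.filter_congr fun a _ => Set.ext_iff.1 h (pos a)
  rcases hp with h | h | h | h
  exacts [Or.inl (key _ h), Or.inr (Or.inl (key _ h)), Or.inr (Or.inr (Or.inl (key _ h))),
    Or.inr (Or.inr (Or.inr (key _ h)))]

lemma splitsAtMostOneFiber_of_caterpillar_displays {β : Type*} {f : α → β} {pos : α → Fin n}
    (hpos : Set.BijOn pos E Set.univ) (hcons : ConsecutiveFibers f E pos) (hn : 3 ≤ n)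
    {U : Finset α} (hU : (caterpillar pos hpos hn).Displays U) : SplitsAtMostOneFiber f E U := by
  obtain ⟨p, rfl | rfl | rfl | rfl⟩ := caterpillar_displays pos hpos hn hU
  · exact splitsAtMostOneFiber_of_card_le_one (card_filter_val_eq_le_one hpos.injOn p)
  · rw [Finset.filter_not]
    exact (splitsAtMostOneFiber_of_card_le_one (card_filter_val_eq_le_one hpos.injOn p)).sdiff
  · exact hcons.splitsAtMostOneFiber_filter_le p
  · simp_rw [← not_le, Finset.filter_not]
    exact (hcons.splitsAtMostOneFiber_filter_le p).sdiff

end Decomp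

lemma SetSystem.numClasses_le_of_complete_invariant {α : Type} {β : Type*} [Finite β]
    (S : SetSystem α) {U : Finset α} (c : {X : Finset α // X ⊆ U} → β)
    (hc : ∀ X X', c X = c X' → S.Eqv U X X') : S.numClasses U ≤ Nat.card β := by
  refine Nat.card_le_card_of_injective (fun q => c q.out) fun q q' h => ?_
  rw [← Quotient.out_eq q, ← Quotient.out_eq q']
  exact Quotient.sound (hc _ _ h)

namespace Matroid

variable {α : Type} [Fintype α] {M : Matroid α} {U X X' Z : Finset α} {x x' : α}

lemma mem_toSetSystem_E {a : α} : a ∈ M.toSetSystem.E ↔ a ∈ M.E :=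
  Set.Finite.mem_toFinset _

lemma rank_bddAbove (M : Matroid α) (U : Set α) :
    BddAbove {n : ℕ | ∃ X : Finset α, ↑X ⊆ U ∧ M.Indep ↑X ∧ X.card = n} :=
  ⟨Fintype.card α, by rintro _ ⟨X, -, -, rfl⟩; exact X.card_le_univ⟩

lemma card_le_rank {U : Set α} (hX : M.Indep ↑X) (hXU : ↑X ⊆ U) : X.card ≤ M.rank U :=
  le_csSup (M.rank_bddAbove U) ⟨X, hXU, hX, rfl⟩

lemma exists_indep_card_eq_rank (M : Matroid α) (U : Set α) :
    ∃ X : Finset α, ↑X ⊆ U ∧ M.Indep ↑X ∧ X.card = M.rank U :=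
  Nat.sSup_mem (s := {n : ℕ | ∃ X : Finset α, (X : Set α) ⊆ U ∧ M.Indep ↑X ∧ X.card = n})
    ⟨0, ∅, by simp, by simp, rfl⟩ (M.rank_bddAbove U)

lemma eqv_of_not_indep (hX : ¬ M.Indep ↑X) (hX' : ¬ M.Indep ↑X') : M.toSetSystem.Eqv U X X' :=
  fun _ _ => iff_of_false (fun h => hX (h.subset (by simp))) (fun h => hX' (h.subset (by simp)))

/-- Loops lie in every closure, and a non-loop `z ∈ cl {x}` outside `U` has `cl {z} = cl {x}`,
so then the parallel class of `x` crosses `U`. -/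
lemma mem_closure_iff_of_splitsAtMostOneFiber {z : α}
    (hU : SplitsAtMostOneFiber (fun a => M.closure {a}) M.toSetSystem.E U)
    (hx : x ∈ U) (hx' : x' ∈ U)
    (hcross : (∃ y ∈ M.toSetSystem.E \ U, M.closure {y} = M.closure {x}) ↔
      (∃ y ∈ M.toSetSystem.E \ U, M.closure {y} = M.closure {x'}))
    (hz : z ∈ M.toSetSystem.E \ U) : z ∈ M.closure {x} ↔ z ∈ M.closure {x'} := by
  have key : ∀ y ∈ U, ∀ y' ∈ U, ((∃ w ∈ M.toSetSystem.E \ U, M.closure {w} = M.closure {y}) →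
      (∃ w ∈ M.toSetSystem.E \ U, M.closure {w} = M.closure {y'})) →
      z ∈ M.closure {y} → z ∈ M.closure {y'} := by
    intro y hy y' hy' himp hzy
    have hzE : z ∈ M.E := mem_toSetSystem_E.1 (Finset.mem_sdiff.1 hz).1
    rcases M.isLoop_or_isNonloop z with hl | hnl
    · exact hl.mem_closure _
    · have hzy' := hnl.closure_eq_of_mem_closure hzy
      obtain ⟨w, hw, hwy'⟩ := himp ⟨z, hz, hzy'⟩
      rwa [← show M.closure {y} = M.closure {y'} from hU y hy y' hy' z hz w hw hzy' hwy']
  exact ⟨key x hx x' hx' hcross.1, key x' hx' x hx hcross.2⟩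

/-- Encodes the `∼_U`-class of `X` when `M` has rank two and `U` splits at most one parallel
class (see `eqv_of_eqvClassCode_eq`). -/
noncomputable def eqvClassCode (M : Matroid α) (U X : Finset α) : Fin 5 :=
  if ¬ M.Indep (X : Set α) then 0
  else if X.card = 0 then 1
  else if X.card = 1 then
    if ∃ z ∈ M.toSetSystem.E \ U, M.closure {z} = M.closure (X : Set α) then 2 else 3
  else 4

lemma two_le_card_toSetSystem_E (hr : M.rank M.E = 2) : 2 ≤ M.toSetSystem.E.card := by
  obtain ⟨X, hXE, -, hX⟩ := M.exists_indep_card_eq_rank M.E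
  rw [hr] at hX
  exact hX ▸ Finset.card_le_card fun a ha => mem_toSetSystem_E.2 (hXE ha)

lemma card_le_two_of_indep (hr : M.rank M.E = 2) (hX : M.Indep ↑X) : X.card ≤ 2 :=
  hr ▸ card_le_rank hX hX.subset_ground

lemma indep_union_iff_of_two_le_card (hr : M.rank M.E = 2) (hX : M.Indep ↑X) (h2 : 2 ≤ X.card)
    (hXZ : Disjoint X Z) : M.Indep ↑(X ∪ Z) ↔ Z = ∅ := by
  refine ⟨fun h => ?_, by rintro rfl; simpa using hX⟩
  have := card_le_two_of_indep hr h
  rw [Finset.card_union_of_disjoint hXZ] at this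
  exact Finset.card_eq_zero.1 (by omega)

lemma indep_insert_iff (hr : M.rank M.E = 2) (hx : M.IsNonloop x) (hxZ : x ∉ Z) :
    M.Indep ↑(insert x Z) ↔ Z = ∅ ∨ ∃ z, Z = {z} ∧ z ∈ M.E \ M.closure {x} := by
  have pair_iff : ∀ z, z ≠ x →
      (M.Indep ↑(insert x {z} : Finset α) ↔ z ∈ M.E \ M.closure {x}) := by
    intro z hzx
    rw [Finset.coe_insert, Finset.coe_singleton, Set.pair_comm]
    exact hx.indep.insert_indep_iff_of_notMem hzx
  refine ⟨fun h => ?_, ?_⟩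
  · rcases Z.eq_empty_or_nonempty with rfl | hZ
    · exact Or.inl rfl
    have h2 := card_le_two_of_indep hr h
    rw [Finset.card_insert_of_notMem hxZ] at h2
    obtain ⟨z, rfl⟩ := Finset.card_eq_one.1 (le_antisymm (by omega) hZ.card_pos)
    exact Or.inr ⟨z, rfl, (pair_iff z (by simpa [eq_comm] using hxZ)).1 h⟩
  · rintro (rfl | ⟨z, rfl, hz⟩)
    · simpa using hx.indep
    · exact (pair_iff z (by rintro rfl; exact hz.2 (M.mem_closure_self z hz.1))).2 hz

lemma eqv_of_two_le_card (hr : M.rank M.E = 2) (hXU : X ⊆ U) (hX'U : X' ⊆ U) (hX : M.Indep ↑X)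
    (hX' : M.Indep ↑X') (h2 : 2 ≤ X.card) (h2' : 2 ≤ X'.card) :
    M.toSetSystem.Eqv U X X' := fun _ hZ =>
  have hUZ := Finset.disjoint_sdiff.mono_right hZ
  (indep_union_iff_of_two_le_card hr hX h2 (hUZ.mono_left hXU)).trans
    (indep_union_iff_of_two_le_card hr hX' h2' (hUZ.mono_left hX'U)).symm

lemma eqv_singleton (hr : M.rank M.E = 2) (hx : M.IsNonloop x) (hx' : M.IsNonloop x')
    (hxU : x ∈ U) (hx'U : x' ∈ U)
    (h : ∀ z ∈ M.toSetSystem.E \ U, z ∈ M.closure {x} ↔ z ∈ M.closure {x'}) :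
    M.toSetSystem.Eqv U {x} {x'} := by
  intro Z hZ
  have hZU : ∀ y ∈ U, y ∉ Z := fun y hy hyZ => (Finset.mem_sdiff.1 (hZ hyZ)).2 hy
  show M.Indep ↑({x} ∪ Z) ↔ M.Indep ↑({x'} ∪ Z)
  rw [← Finset.insert_eq, ← Finset.insert_eq, indep_insert_iff hr hx (hZU x hxU),
    indep_insert_iff hr hx' (hZU x' hx'U)]
  refine or_congr_right (exists_congr fun z => and_congr_right fun hZz => ?_)
  subst hZz
  rw [Set.mem_sdiff, Set.mem_sdiff, h z (hZ (Finset.mem_singleton_self z))]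

lemma eqv_of_card_eq_one (hr : M.rank M.E = 2)
    (hU : SplitsAtMostOneFiber (fun a => M.closure {a}) M.toSetSystem.E U)
    (hXU : X ⊆ U) (hX'U : X' ⊆ U) (hX : M.Indep ↑X) (hX' : M.Indep ↑X')
    (h1 : X.card = 1) (h1' : X'.card = 1)
    (hcross : (∃ z ∈ M.toSetSystem.E \ U, M.closure {z} = M.closure ↑X) ↔
      (∃ z ∈ M.toSetSystem.E \ U, M.closure {z} = M.closure ↑X')) :
    M.toSetSystem.Eqv U X X' := by
  obtain ⟨x, rfl⟩ := Finset.card_eq_one.1 h1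
  obtain ⟨x', rfl⟩ := Finset.card_eq_one.1 h1'
  rw [Finset.singleton_subset_iff] at hXU hX'U
  rw [Finset.coe_singleton, indep_singleton] at hX hX'
  simp only [Finset.coe_singleton] at hcross
  exact eqv_singleton hr hX hX' hXU hX'U fun z hz =>
    mem_closure_iff_of_splitsAtMostOneFiber hU hXU hX'U hcross hz

lemma eqv_of_eqvClassCode_eq (hr : M.rank M.E = 2)
    (hU : SplitsAtMostOneFiber (fun a => M.closure {a}) M.toSetSystem.E U)
    (hXU : X ⊆ U) (hX'U : X' ⊆ U)
    (h : M.eqvClassCode U X = M.eqvClassCode U X') : M.toSetSystem.Eqv U X X' := by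
  unfold eqvClassCode at h
  split_ifs at h <;> first | exact absurd h (by decide) | skip
  · rw [Finset.card_eq_zero.1 ‹X.card = 0›, Finset.card_eq_zero.1 ‹X'.card = 0›]
    exact fun _ _ => Iff.rfl
  · exact eqv_of_card_eq_one hr hU hXU hX'U ‹_› ‹_› ‹_› ‹_› (iff_of_true ‹_› ‹_›)
  · exact eqv_of_card_eq_one hr hU hXU hX'U ‹_› ‹_› ‹_› ‹_› (iff_of_false ‹_› ‹_›)
  · exact eqv_of_two_le_card hr hXU hX'U ‹_› ‹_› (by omega) (by omega)
  · exact eqv_of_not_indep ‹_› ‹_›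

lemma numClasses_le_five (hr : M.rank M.E = 2)
    (hU : SplitsAtMostOneFiber (fun a => M.closure {a}) M.toSetSystem.E U) :
    M.toSetSystem.numClasses U ≤ 5 := by
  simpa using M.toSetSystem.numClasses_le_of_complete_invariant (fun X => M.eqvClassCode U X.1)
    fun X X' h => eqv_of_eqvClassCode_eq hr hU X.2 X'.2 h

theorem dw_le_five_of_rank_eq_two (hr : M.rank M.E = 2) : M.dw ≤ 5 := by
  suffices ∃ D : Decomp α M.toSetSystem.E, ∀ U, D.Displays U →
      SplitsAtMostOneFiber (fun a => M.closure {a}) M.toSetSystem.E U by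
    obtain ⟨D, hD⟩ := this
    exact Nat.sInf_le ⟨D, fun U hU => numClasses_le_five hr (hD U hU)⟩
  rcases (two_le_card_toSetSystem_E hr).eq_or_lt with h2 | h3
  · obtain ⟨pos, hpos, -⟩ :=
      exists_bijOn_consecutiveFibers (fun a => M.closure {a}) _ h2.symm two_pos
    exact ⟨Decomp.pair pos hpos, fun U hU => splitsAtMostOneFiber_of_card_eq_two h2.symm hU.1⟩
  · obtain ⟨pos, hpos, hcons⟩ :=
      exists_bijOn_consecutiveFibers (fun a => M.closure {a}) _ rfl (Nat.zero_lt_of_lt h3)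
    exact ⟨Decomp.caterpillar pos hpos h3, fun U hU =>
      Decomp.splitsAtMostOneFiber_of_caterpillar_displays hpos hcons h3 hU⟩

end Matroid

/-- every finite matroid of rank two has decomposition-width at most `5`;
consequently the class of rank-two matroids is pigeonhole. -/
theorem statement_18 {α : Type} [Fintype α] :
    (∀ M : Matroid α, M.rank M.E = 2 → M.dw ≤ 5) ∧
      Matroid.PigeonholeClass {M : Matroid α | M.rank M.E = 2} :=
  ⟨fun _ hM => Matroid.dw_le_five_of_rank_eq_two hM,
    fun _ _ => ⟨5, fun _ hM _ => Matroid.dw_le_five_of_rank_eq_two hM⟩⟩
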